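/- Let F be a finite-dimensional commutative associative normed ℝ-algebra, let ζ ∈ F, and let m, u, v : ℝ → F be smooth and 1-periodic. Then ∫₀¹ ( m ∘ (u ∘ v' − u' ∘ v) + ζ ∘ u ∘ v''' ) dx = − ∫₀¹ ( 2 m ∘ u' + m' ∘ u + ζ ∘ u''' ) ∘ v dx. (This is the computation showing that the coadjoint action of vir_F on its regular dual is ad*_{(u∂,a)}(m dx², ζ) = ((2m∘u_x + m_x∘u + ζ∘u_{xxx}) dx², 0).) -/

import Mathlib

open scoped ContDiff
section Aux

variable {F : Type*} [NormedCommRing F] [NormedAlgebra ℝ F]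

lemma periodic_deriv_aux (f : ℝ → F) (hf : Function.Periodic f 1) :
    Function.Periodic (deriv f) 1 := by
  intro x
  have h : f = fun y => f (y + 1) := funext fun y => (hf y).symm
  conv_rhs => rw [h]
  exact (deriv_comp_add_const f 1 x).symm

lemma contDiff_deriv_aux (f : ℝ → F) (hf : ContDiff ℝ ∞ f) : ContDiff ℝ ∞ (deriv f) :=
  (contDiff_infty_iff_deriv.mp hf).2

lemma iteratedDeriv_three_eq (f : ℝ → F) :
    iteratedDeriv 3 f = deriv (deriv (deriv f)) := by
  rw [show (3:ℕ) = 2 + 1 from rfl, iteratedDeriv_succ,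
    show (2:ℕ) = 1 + 1 from rfl, iteratedDeriv_succ, iteratedDeriv_one]

end Aux

/-- The computation yielding the coadjoint action of `vir_F` on its regular dual:
`⟨m̂, [û, v̂]⟩* = ∫₀¹ (m∘(u∘v' − u'∘v) + ζ∘u∘v''') dx
  = −∫₀¹ (2m∘u' + m'∘u + ζ∘u''') ∘ v dx`,
so that `ad*_{(u∂,a)}(m dx², ζ) = ((2m∘u_x + m_x∘u + ζ∘u_{xxx}) dx², 0)`. -/
theorem coadjoint_action_formula
    {F : Type*} [NormedCommRing F] [NormedAlgebra ℝ F] [FiniteDimensional ℝ F]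
    (ζ : F) (m u v : ℝ → F)
    (hm : ContDiff ℝ (⊤ : ℕ∞) m) (hu : ContDiff ℝ (⊤ : ℕ∞) u) (hv : ContDiff ℝ (⊤ : ℕ∞) v)
    (hmp : Function.Periodic m 1) (hup : Function.Periodic u 1)
    (hvp : Function.Periodic v 1) :
    ∫ x in (0:ℝ)..1,
        (m x * (u x * deriv v x - deriv u x * v x) + ζ * u x * iteratedDeriv 3 v x)
      = -∫ x in (0:ℝ)..1,
          (2 * m x * deriv u x + deriv m x * u x + ζ * iteratedDeriv 3 u x) * v x := by
  rw [iteratedDeriv_three_eq u, iteratedDeriv_three_eq v]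
  -- smoothness of all derivatives
  have hm' : ContDiff ℝ ∞ m := hm.of_le (by simp)
  have hu' : ContDiff ℝ ∞ u := hu.of_le (by simp)
  have hv' : ContDiff ℝ ∞ v := hv.of_le (by simp)
  have hm1 := contDiff_deriv_aux m hm' 
  have hu1 := contDiff_deriv_aux u hu'
  have hu2 := contDiff_deriv_aux _ hu1
  have hu3 := contDiff_deriv_aux _ hu2
  have hv1 := contDiff_deriv_aux v hv'
  have hv2 := contDiff_deriv_aux _ hv1
  have hv3 := contDiff_deriv_aux _ hv2
  set f : ℝ → F := fun x =>
    m x * (u x * deriv v x - deriv u x * v x) + ζ * u x * deriv (deriv (deriv v)) x with hf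
  set g : ℝ → F := fun x =>
    (2 * m x * deriv u x + deriv m x * u x + ζ * deriv (deriv (deriv u)) x) * v x with hg
  set G : ℝ → F := fun x =>
    m x * u x * v x + ζ * (u x * deriv (deriv v) x - deriv u x * deriv v x
      + deriv (deriv u) x * v x) with hG
  have hd : ∀ x : ℝ, HasDerivAt G (f x + g x) x := by
    intro x
    have Dm : HasDerivAt m (deriv m x) x := (hm'.differentiable (by norm_num) x).hasDerivAt
    have Du : HasDerivAt u (deriv u x) x := (hu'.differentiable (by norm_num) x).hasDerivAt
    have Du1 : HasDerivAt (deriv u) (deriv (deriv u) x) x :=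
      (hu1.differentiable (by norm_num) x).hasDerivAt
    have Du2 : HasDerivAt (deriv (deriv u)) (deriv (deriv (deriv u)) x) x :=
      (hu2.differentiable (by norm_num) x).hasDerivAt
    have Dv : HasDerivAt v (deriv v x) x := (hv'.differentiable (by norm_num) x).hasDerivAt
    have Dv1 : HasDerivAt (deriv v) (deriv (deriv v) x) x :=
      (hv1.differentiable (by norm_num) x).hasDerivAt
    have Dv2 : HasDerivAt (deriv (deriv v)) (deriv (deriv (deriv v)) x) x :=
      (hv2.differentiable (by norm_num) x).hasDerivAt
    have key := ((Dm.mul Du).mul Dv).add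
      ((((Du.mul Dv2).sub (Du1.mul Dv1)).add (Du2.mul Dv)).const_mul ζ)
    convert key using 1
    · rfl
    · rfl
    simp only [hf, hg, Pi.mul_apply]
    ring
  have cm : Continuous m := hm.continuous
  have cm1 : Continuous (deriv m) := hm1.continuous
  have cu : Continuous u := hu.continuous
  have cu1 : Continuous (deriv u) := hu1.continuous
  have cu3 : Continuous (deriv (deriv (deriv u))) := hu3.continuous
  have cv : Continuous v := hv.continuous
  have cv1 : Continuous (deriv v) := hv1.continuous
  have cv3 : Continuous (deriv (deriv (deriv v))) := hv3.continuous
  have hfc : Continuous f := by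
    simp only [hf]; fun_prop
  have hgc : Continuous g := by
    simp only [hg]; fun_prop
  have hint : ∫ x in (0:ℝ)..1, (f x + g x) = G 1 - G 0 :=
    intervalIntegral.integral_eq_sub_of_hasDerivAt (fun x _ => hd x)
      ((hfc.add hgc).intervalIntegrable 0 1)
  have hG10 : G 1 = G 0 := by
    have pm := hmp 0
    have pu := hup 0
    have pv := hvp 0
    have pu1 := periodic_deriv_aux u hup 0
    have pv1 := periodic_deriv_aux v hvp 0
    have pu2 := periodic_deriv_aux _ (periodic_deriv_aux u hup) 0
    have pv2 := periodic_deriv_aux _ (periodic_deriv_aux v hvp) 0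
    simp only [zero_add] at pm pu pv pu1 pv1 pu2 pv2
    simp [hG, pm, pu, pv, pu1, pv1, pu2, pv2]
  rw [intervalIntegral.integral_add (hfc.intervalIntegrable 0 1)
    (hgc.intervalIntegrable 0 1), hG10, sub_self] at hint
  rw [eq_neg_iff_add_eq_zero]
  exact hint
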